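/- Let D be the derivation p(x)·d/dx on k(x) with p ∈ k[x], let T ∈ k(x)^{n×n} with an irreducible left matrix fraction description T = D_M^{-1}N (D_M, N polynomial matrices), and set θ = D + T (acting on k(x)^n by θ(v) = D(v) + T·v, where D acts entrywise). Let θ_1 = D + (N − D(D_M))·D_M^{-1}. Then for all s ≥ 0, θ^s = D^s + D_M^{-1}·Ω_s, where Ω_s = Σ_{i=0}^{s−1} θ_1^i ∘ N ∘ D^{s−1−i} (with N denoting left multiplication by the polynomial matrix N). -/

import Mathlib

open Polynomial

noncomputable section

/-- Normalization on a field: every nonzero element normalizes to `1`. -/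
noncomputable def fieldNormalizationMonoid (K : Type*) [Field K] : NormalizationMonoid K := by
  classical
  exact
  { normUnit := fun a => if h : a = 0 then 1 else (Units.mk0 a h)⁻¹
    normUnit_zero := dif_pos rfl
    normUnit_one := by
      rw [dif_neg one_ne_zero]
      exact Units.ext (by simp)
    normUnit_mul_units := fun {a} u ha => by
      rw [dif_neg (mul_ne_zero ha u.ne_zero), dif_neg ha]
      exact Units.ext (by simp <;> ring) }

attribute [local instance] fieldNormalizationMonoid

noncomputable local instance (K : Type*) [Field K] : NormalizedGCDMonoid (Polynomial K) :=
  UniqueFactorizationMonoid.toNormalizedGCDMonoid _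

variable {k : Type*} [Field k] [CharZero k]

/-- The ℓ-th determinantal denominator of a rational matrix: the monic least common
denominator of all minors of size at most ℓ. -/
def detDen {n p : ℕ} (R : Matrix (Fin n) (Fin p) (RatFunc k)) (ℓ : ℕ) : Polynomial k :=
  (Finset.range (ℓ + 1)).lcm fun i =>
    (Finset.univ : Finset ((Fin i ↪ Fin n) × (Fin i ↪ Fin p))).lcm fun fg =>
      (Matrix.det fun a b => R (fg.1 a) (fg.2 b)).denom

/-- Derivative of a rational function. -/
def rfDeriv (f : RatFunc k) : RatFunc k :=
  algebraMap (Polynomial k) (RatFunc k)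
      (Polynomial.derivative f.num * f.denom - f.num * Polynomial.derivative f.denom) /
    algebraMap (Polynomial k) (RatFunc k) (f.denom ^ 2)

/-- The derivation `p(x) d/dx` on `k(x)`. -/
def pDeriv (p : Polynomial k) (f : RatFunc k) : RatFunc k :=
  algebraMap (Polynomial k) (RatFunc k) p * rfDeriv f

/-- Entrywise action of the derivation `p(x) d/dx` on vectors. -/
def pDerivVec {n : ℕ} (p : Polynomial k) (v : Fin n → RatFunc k) : Fin n → RatFunc k :=
  fun i => pDeriv p (v i)

/-- The pseudo-linear map `θ = D + T` on `k(x)^n`, `θ(v) = D(v) + T v`. -/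
def pseudoLinDiff {n : ℕ} (p : Polynomial k) (T : Matrix (Fin n) (Fin n) (RatFunc k))
    (v : Fin n → RatFunc k) : Fin n → RatFunc k :=
  pDerivVec p v + T.mulVec v

/-!
Since `D_M T = N`, the gauge transformation by `D_M` gives `θ (D_M⁻¹ w) = D_M⁻¹ θ₁ w`, and
`θ = D + D_M⁻¹ N`. Hence applying `θ` to `θ^s v = D^s v + D_M⁻¹ Ω_s v` yields
`D^{s+1} v + D_M⁻¹ (N D^s v + θ₁ Ω_s v)`, and `N D^s + θ₁ Ω_s = Ω_{s+1}`.
-/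

open scoped Matrix

local notation "ι" => algebraMap (Polynomial k) (RatFunc k)

section

omit [CharZero k]

lemma rfDeriv_div (a b : Polynomial k) (hb : b ≠ 0) :
    rfDeriv (ι a / ι b) = ι (derivative a * b - a * derivative b) / ι (b ^ 2) := by
  set f : RatFunc k := ι a / ι b
  have hcross : f.num * b = a * f.denom := by
    apply RatFunc.algebraMap_injective k
    have h : ι f.num / ι f.denom = ι a / ι b := RatFunc.num_div_denom f
    rw [div_eq_div_iff (RatFunc.algebraMap_ne_zero f.denom_ne_zero)
      (RatFunc.algebraMap_ne_zero hb)] at h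
    simpa only [map_mul] using h
  -- `a / b` is `f.num / f.denom` with numerator and denominator scaled by a common `c`
  obtain ⟨c, hc⟩ : f.denom ∣ b :=
    f.isCoprime_num_denom.symm.dvd_of_dvd_mul_left ⟨a, by linear_combination hcross⟩
  have hc0 : c ≠ 0 := by rintro rfl; exact hb (by simpa using hc)
  have ha : a = f.num * c :=
    mul_right_cancel₀ f.denom_ne_zero (by rw [hc] at hcross; linear_combination -hcross)
  have hnum : derivative a * b - a * derivative b =
      c ^ 2 * (derivative f.num * f.denom - f.num * derivative f.denom) := by
    rw [ha, hc]; simp only [derivative_mul]; ring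
  rw [hnum, show b ^ 2 = c ^ 2 * f.denom ^ 2 by rw [hc]; ring, map_mul, map_mul,
    mul_div_mul_left _ _ (RatFunc.algebraMap_ne_zero (pow_ne_zero 2 hc0))]
  rfl

lemma rfDeriv_algebraMap (a : Polynomial k) : rfDeriv (ι a) = ι (derivative a) := by
  simpa using rfDeriv_div a 1 one_ne_zero

lemma rfDeriv_div_add (a₁ b₁ a₂ b₂ : Polynomial k) (h₁ : b₁ ≠ 0) (h₂ : b₂ ≠ 0) :
    rfDeriv (ι a₁ / ι b₁ + ι a₂ / ι b₂) = rfDeriv (ι a₁ / ι b₁) + rfDeriv (ι a₂ / ι b₂) := by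
  have hb₁ : ι b₁ ≠ 0 := RatFunc.algebraMap_ne_zero h₁
  have hb₂ : ι b₂ ≠ 0 := RatFunc.algebraMap_ne_zero h₂
  have hsum : ι a₁ / ι b₁ + ι a₂ / ι b₂ = ι (a₁ * b₂ + a₂ * b₁) / ι (b₁ * b₂) := by
    rw [div_add_div _ _ hb₁ hb₂]; simp only [map_add, map_mul]; ring
  rw [hsum, rfDeriv_div _ _ (mul_ne_zero h₁ h₂), rfDeriv_div _ _ h₁, rfDeriv_div _ _ h₂]
  simp only [derivative_mul, map_mul, map_add, map_sub, map_pow]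
  field_simp
  ring

lemma rfDeriv_div_mul (a₁ b₁ a₂ b₂ : Polynomial k) (h₁ : b₁ ≠ 0) (h₂ : b₂ ≠ 0) :
    rfDeriv (ι a₁ / ι b₁ * (ι a₂ / ι b₂)) =
      rfDeriv (ι a₁ / ι b₁) * (ι a₂ / ι b₂) + ι a₁ / ι b₁ * rfDeriv (ι a₂ / ι b₂) := by
  have hb₁ : ι b₁ ≠ 0 := RatFunc.algebraMap_ne_zero h₁
  have hb₂ : ι b₂ ≠ 0 := RatFunc.algebraMap_ne_zero h₂
  rw [div_mul_div_comm, ← map_mul, ← map_mul, rfDeriv_div _ _ (mul_ne_zero h₁ h₂),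
    rfDeriv_div _ _ h₁, rfDeriv_div _ _ h₂]
  simp only [derivative_mul, map_mul, map_add, map_sub, map_pow]
  field_simp
  ring

lemma rfDeriv_add (f g : RatFunc k) : rfDeriv (f + g) = rfDeriv f + rfDeriv g := by
  rw [← RatFunc.num_div_denom f, ← RatFunc.num_div_denom g]
  exact rfDeriv_div_add _ _ _ _ f.denom_ne_zero g.denom_ne_zero

lemma rfDeriv_mul (f g : RatFunc k) : rfDeriv (f * g) = rfDeriv f * g + f * rfDeriv g := by
  rw [← RatFunc.num_div_denom f, ← RatFunc.num_div_denom g]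
  exact rfDeriv_div_mul _ _ _ _ f.denom_ne_zero g.denom_ne_zero

lemma rfDeriv_zero : rfDeriv (0 : RatFunc k) = 0 := by
  simpa using rfDeriv_algebraMap (0 : Polynomial k)

def pDerivHom (p : Polynomial k) : RatFunc k →+ RatFunc k where
  toFun := pDeriv p
  map_zero' := by simp only [pDeriv, rfDeriv_zero, mul_zero]
  map_add' f g := by simp only [pDeriv, rfDeriv_add, mul_add]

lemma pDeriv_mul (p : Polynomial k) (f g : RatFunc k) :
    pDeriv p (f * g) = pDeriv p f * g + f * pDeriv p g := by
  simp only [pDeriv, rfDeriv_mul]; ring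

lemma pDeriv_algebraMap (p q : Polynomial k) : pDeriv p (ι q) = ι (p * derivative q) := by
  rw [pDeriv, rfDeriv_algebraMap, map_mul]

lemma pDerivVec_add {n : ℕ} (p : Polynomial k) (u v : Fin n → RatFunc k) :
    pDerivVec p (u + v) = pDerivVec p u + pDerivVec p v :=
  funext fun i => (pDerivHom p).map_add (u i) (v i)

lemma pDerivVec_mulVec {n : ℕ} (p : Polynomial k) (M : Matrix (Fin n) (Fin n) (RatFunc k))
    (v : Fin n → RatFunc k) :
    pDerivVec p (M *ᵥ v) = M.map (pDeriv p) *ᵥ v + M *ᵥ pDerivVec p v := by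
  funext i
  simp only [pDerivVec, Matrix.mulVec, dotProduct, Pi.add_apply, Matrix.map_apply,
    ← Finset.sum_add_distrib, ← pDeriv_mul]
  exact map_sum (pDerivHom p) _ _

def pseudoLinDiffHom {n : ℕ} (p : Polynomial k) (T : Matrix (Fin n) (Fin n) (RatFunc k)) :
    (Fin n → RatFunc k) →+ (Fin n → RatFunc k) where
  toFun := pseudoLinDiff p T
  map_zero' := by
    funext i
    simp [pseudoLinDiff, pDerivVec, pDeriv, rfDeriv_zero]
  map_add' u v := by
    simp only [pseudoLinDiff, pDerivVec_add, Matrix.mulVec_add]; abel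

/-- Gauge transformation by `P`. -/
theorem pseudoLinDiff_inv_mulVec {n : ℕ} (p : Polynomial k)
    (T P : Matrix (Fin n) (Fin n) (RatFunc k)) (hP : IsUnit P.det) (w : Fin n → RatFunc k) :
    pseudoLinDiff p T (P⁻¹ *ᵥ w) =
      P⁻¹ *ᵥ pseudoLinDiff p ((P * T - P.map (pDeriv p)) * P⁻¹) w := by
  obtain ⟨u, rfl⟩ : ∃ u, w = P *ᵥ u :=
    ⟨P⁻¹ *ᵥ w, by rw [Matrix.mulVec_mulVec, Matrix.mul_nonsing_inv P hP, Matrix.one_mulVec]⟩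
  have hgauge : P.map (pDeriv p) *ᵥ u + P *ᵥ pDerivVec p u + (P * T - P.map (pDeriv p)) *ᵥ u =
      P *ᵥ (pDerivVec p u + T *ᵥ u) := by
    rw [Matrix.sub_mulVec, Matrix.mulVec_add, ← Matrix.mulVec_mulVec]; abel
  rw [Matrix.mulVec_mulVec, Matrix.nonsing_inv_mul P hP, Matrix.one_mulVec, pseudoLinDiff,
    pseudoLinDiff, pDerivVec_mulVec, Matrix.mulVec_mulVec, Matrix.mul_assoc,
    Matrix.nonsing_inv_mul P hP, Matrix.mul_one, hgauge, Matrix.mulVec_mulVec,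
    Matrix.nonsing_inv_mul P hP, Matrix.one_mulVec]

theorem iterate_eq_iterate_add_sum {V W : Type*} [AddCommMonoid V] [AddCommMonoid W]
    (θ : V →+ V) (θ₁ : W →+ W) (L : W →+ V) (D : V → V) (N : V → W)
    (hθ : ∀ v, θ v = D v + L (N v)) (hL : ∀ w, θ (L w) = L (θ₁ w)) (s : ℕ) (v : V) :
    θ^[s] v = D^[s] v + L (∑ i ∈ Finset.range s, θ₁^[i] (N (D^[s - 1 - i] v))) := by
  induction s with
  | zero => simp
  | succ s ih =>
    have hshift : ∑ i ∈ Finset.range (s + 1), θ₁^[i] (N (D^[s + 1 - 1 - i] v)) =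
        θ₁ (∑ i ∈ Finset.range s, θ₁^[i] (N (D^[s - 1 - i] v))) + N (D^[s] v) := by
      rw [Finset.sum_range_succ', map_sum]
      refine congrArg₂ (· + ·) (Finset.sum_congr rfl fun i _ => ?_) rfl
      rw [Function.iterate_succ_apply', show s + 1 - 1 - (i + 1) = s - 1 - i by omega]
    rw [Function.iterate_succ_apply', ih, map_add, hθ, hL, hshift, map_add,
      Function.iterate_succ_apply']
    abel

end

theorem pow_pseudoLinDiff_eq_general {n : ℕ} (p : Polynomial k)
    (T : Matrix (Fin n) (Fin n) (RatFunc k))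
    (DM N : Matrix (Fin n) (Fin n) (Polynomial k)) (hDM : DM.det ≠ 0)
    (hT : T = (DM.map (algebraMap (Polynomial k) (RatFunc k)))⁻¹ *
        (N.map (algebraMap (Polynomial k) (RatFunc k)))) :
    ∀ s : ℕ, ∀ v : Fin n → RatFunc k,
      (pseudoLinDiff p T)^[s] v =
        (pDerivVec p)^[s] v +
          ((DM.map (algebraMap (Polynomial k) (RatFunc k)))⁻¹).mulVec
            (∑ i ∈ Finset.range s,
              (pseudoLinDiff p
                  (((N - DM.map (fun q => p * Polynomial.derivative q)).map
                      (algebraMap (Polynomial k) (RatFunc k))) *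
                    (DM.map (algebraMap (Polynomial k) (RatFunc k)))⁻¹))^[i]
                ((N.map (algebraMap (Polynomial k) (RatFunc k))).mulVec
                  ((pDerivVec p)^[s - 1 - i] v))) := by
  have hdet : IsUnit (DM.map ι).det := by
    rw [show DM.map ι = (algebraMap (Polynomial k) (RatFunc k)).mapMatrix DM from rfl,
      ← RingHom.map_det]
    exact (RatFunc.algebraMap_ne_zero hDM).isUnit
  have hDMT : DM.map ι * T = N.map ι := by
    rw [hT, Matrix.mul_nonsing_inv_cancel_left _ _ hdet]
  have hDDM : (DM.map ι).map (pDeriv p) = (DM.map fun q => p * derivative q).map ι := by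
    ext i j; exact pDeriv_algebraMap p (DM i j)
  have hθ₁ : ((N - DM.map fun q => p * derivative q).map ι) * (DM.map ι)⁻¹ =
      (DM.map ι * T - (DM.map ι).map (pDeriv p)) * (DM.map ι)⁻¹ := by
    rw [hDMT, hDDM, Matrix.map_sub _ (map_sub _)]
  intro s v
  rw [hθ₁]
  refine iterate_eq_iterate_add_sum (pseudoLinDiffHom p T) (pseudoLinDiffHom p _)
    (Matrix.mulVecLin (DM.map ι)⁻¹).toAddMonoidHom (pDerivVec p) (N.map ι).mulVec
    (fun v => ?_) (pseudoLinDiff_inv_mulVec p T _ hdet) s v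
  show pDerivVec p v + T *ᵥ v = _
  rw [hT, ← Matrix.mulVec_mulVec]
  rfl

/-- For `θ = D + T` with an irreducible left MFD `T = D_M⁻¹ N`, and
`θ₁ = D + (N − D(D_M)) D_M⁻¹`, one has `θ^s = D^s + D_M⁻¹ Ω_s` with
`Ω_s = Σ_{i<s} θ₁^i ∘ N ∘ D^{s−1−i}`. -/
theorem pow_pseudoLinDiff_eq {n : ℕ} (p : Polynomial k)
    (T : Matrix (Fin n) (Fin n) (RatFunc k))
    (DM N : Matrix (Fin n) (Fin n) (Polynomial k)) (hDM : DM.det ≠ 0)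
    (hT : T = (DM.map (algebraMap (Polynomial k) (RatFunc k)))⁻¹ *
        (N.map (algebraMap (Polynomial k) (RatFunc k))))
    (hirr : ∀ G A B : Matrix (Fin n) (Fin n) (Polynomial k),
      DM = G * A → N = G * B → IsUnit G.det) :
    ∀ s : ℕ, ∀ v : Fin n → RatFunc k,
      (pseudoLinDiff p T)^[s] v =
        (pDerivVec p)^[s] v +
          ((DM.map (algebraMap (Polynomial k) (RatFunc k)))⁻¹).mulVec
            (∑ i ∈ Finset.range s,
              (pseudoLinDiff p
                  (((N - DM.map (fun q => p * Polynomial.derivative q)).map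
                      (algebraMap (Polynomial k) (RatFunc k))) *
                    (DM.map (algebraMap (Polynomial k) (RatFunc k)))⁻¹))^[i]
                ((N.map (algebraMap (Polynomial k) (RatFunc k))).mulVec
                  ((pDerivVec p)^[s - 1 - i] v))) :=
  pow_pseudoLinDiff_eq_general p T DM N hDM hT
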